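/- arXiv:1601.08029 — 7 statements merged into one kernel-verified Lean document; each statement's English description precedes it below -/
import Mathlib

section
/- The function r(x) = -1/12 + 72x is a rational (indeed polynomial) solution of the Riccati equation with parameter λ = 1/144: for every real x with x ≠ 0 and x ≠ 1/432, one has r'(x) + r(x)²/((1-432x)x) - 60 = (1/144)·(1/((1-432x)x)). -/
/-! Since `r' = 72`, multiplying the equation by `(1 - 432x)x` reduces it to the polynomial
identity `r(x)² + 12 (1 - 432x) x = 1/144`. -/

theorem affine_sq_add_mul_eq (x : ℝ) :
    (-1/12 + 72 * x) ^ 2 + 12 * ((1 - 432 * x) * x) = 1 / 144 := by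
  ring

/-- The function `r(x) = -1/12 + 72x` is a (polynomial, hence rational) solution of the
Riccati equation `r'(x) + C_x r(x)^2 - 60 = λ C_x` with `C_x = 1/((1-432x)x)` and
`λ = 1/144`, for every real `x ≠ 0`, `x ≠ 1/432`. -/
theorem riccati_solution_lambda_one_over_144 :
    ∀ x : ℝ, x ≠ 0 → x ≠ 1 / 432 →
      deriv (fun y : ℝ => -1/12 + 72 * y) x
        + (-1/12 + 72 * x) ^ 2 / ((1 - 432 * x) * x) - 60
      = (1 / 144) * (1 / ((1 - 432 * x) * x)) := by
  intro x hx hx'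
  have hC : (1 - 432 * x) * x ≠ 0 :=
    mul_ne_zero (sub_ne_zero.mpr fun h => hx' (by linarith)) hx
  have hr' : deriv (fun y : ℝ => -1/12 + 72 * y) x = 72 := by simp
  rw [hr', eq_sub_of_add_eq (affine_sq_add_mul_eq x)]
  generalize (1 - 432 * x) * x = C at hC ⊢
  field_simp
  ring
end

section
/- The function r(x) = -5/12 + 360x is a rational (indeed polynomial) solution of the Riccati equation with parameter λ = 25/144: for every real x with x ≠ 0 and x ≠ 1/432, one has r'(x) + r(x)²/((1-432x)x) - 60 = (25/144)·(1/((1-432x)x)). -/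
/-! Clearing the denominator `(1 - 432x)x`, and using `r' = 360`, the equation
becomes the polynomial identity `r(x)² + 300 (1 - 432x) x = 25/144`, which holds because
`r(x)² = 129600x² - 300x + 25/144`. -/

theorem deriv_const_add_mul (a b x : ℝ) : deriv (fun y : ℝ => a + b * y) x = b :=
  (((hasDerivAt_id x).const_mul b).const_add a).deriv.trans (mul_one b)

theorem sq_add_mul_one_sub_mul_eq (x : ℝ) :
    (-5/12 + 360 * x) ^ 2 + 300 * ((1 - 432 * x) * x) = 25 / 144 := by
  ring

/-- The function `r(x) = -5/12 + 360x` is a (polynomial, hence rational) solution of the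
Riccati equation `r'(x) + C_x r(x)^2 - 60 = λ C_x` with `C_x = 1/((1-432x)x)` and
`λ = 25/144`, for every real `x ≠ 0`, `x ≠ 1/432`. -/
theorem riccati_solution_lambda_25_over_144 :
    ∀ x : ℝ, x ≠ 0 → x ≠ 1 / 432 →
      deriv (fun y : ℝ => -5/12 + 360 * y) x
        + (-5/12 + 360 * x) ^ 2 / ((1 - 432 * x) * x) - 60
      = (25 / 144) * (1 / ((1 - 432 * x) * x)) := by
  intro x hx h432
  have hden : (1 - 432 * x) * x ≠ 0 := mul_ne_zero (fun h => h432 (by linarith)) hx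
  rw [deriv_const_add_mul, eq_sub_of_add_eq (sq_add_mul_one_sub_mul_eq x), sub_div,
    mul_div_cancel_right₀ _ hden]
  ring
end

section
/- The rational function r(x) = ((864x-1)² + 6)/(12(864x-1)) is a solution of the Riccati equation with parameter λ = 49/144: for every real x with x ≠ 0, x ≠ 1/432 and x ≠ 1/864, one has r'(x) + r(x)²/((1-432x)x) - 60 = (49/144)·(1/((1-432x)x)). -/
/-!
Substituting `u = 864x - 1` gives `(1 - 432x)x = (1 - u²)/1728` and `r = (u² + 6)/(12u)`, so
`r' = 72(u² - 6)/u²`; after clearing the denominator `u²(1 - u²)` the Riccati equation becomes a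
polynomial identity in `u²`.
-/

theorem HasDerivAt.sq_add_const_div_const_mul {u : ℝ → ℝ} {u' x : ℝ} (c k : ℝ)
    (hu : HasDerivAt u u' x) (hux : u x ≠ 0) (hk : k ≠ 0) :
    HasDerivAt (fun y => (u y ^ 2 + c) / (k * u y)) (u' * (u x ^ 2 - c) / (k * u x ^ 2)) x := by
  refine (((hu.pow 2).add_const c).div (hu.const_mul k) (mul_ne_zero hk hux)).congr_deriv ?_
  rw [Pi.pow_apply]
  field_simp
  ring

theorem riccati_identity_in_u {u : ℝ} (hu : u ≠ 0) (hu1 : 1 - u ^ 2 ≠ 0) :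
    864 * (u ^ 2 - 6) / (12 * u ^ 2) + ((u ^ 2 + 6) / (12 * u)) ^ 2 / ((1 - u ^ 2) / 1728) - 60
      = 49 / 144 * (1 / ((1 - u ^ 2) / 1728)) := by
  field_simp
  ring

/-- The rational function `r(x) = ((864x-1)^2 + 6)/(12(864x-1))` solves the Riccati equation
`r'(x) + C_x r(x)^2 - 60 = λ C_x` with `C_x = 1/((1-432x)x)` and `λ = 49/144`, for every real
`x ≠ 0`, `x ≠ 1/432`, `x ≠ 1/864`. -/
theorem riccati_solution_lambda_49_over_144 :
    ∀ x : ℝ, x ≠ 0 → x ≠ 1 / 432 → x ≠ 1 / 864 →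
      deriv (fun y : ℝ => ((864 * y - 1) ^ 2 + 6) / (12 * (864 * y - 1))) x
        + (((864 * x - 1) ^ 2 + 6) / (12 * (864 * x - 1))) ^ 2 / ((1 - 432 * x) * x) - 60
      = (49 / 144) * (1 / ((1 - 432 * x) * x)) := by
  intro x hx0 hx432 hx864
  have hu : 864 * x - 1 ≠ 0 := fun h => hx864 (by linarith)
  have hC : (1 - 432 * x) * x = (1 - (864 * x - 1) ^ 2) / 1728 := by ring
  have hC0 : 1 - (864 * x - 1) ^ 2 ≠ 0 := by
    have h432 : 1 - 432 * x ≠ 0 := fun h => hx432 (by linarith)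
    simpa [hC] using mul_ne_zero h432 hx0
  have hlin : HasDerivAt (fun y : ℝ => 864 * y - 1) 864 x := by
    simpa using ((hasDerivAt_id x).const_mul 864).sub_const 1
  rw [(hlin.sq_add_const_div_const_mul 6 12 hu (by norm_num)).deriv, hC]
  exact riccati_identity_in_u hu hC0
end

section
/- The rational function r(x) = (5(864x-1)² + 6)/(12(864x-1)) is a solution of the Riccati equation with parameter λ = 121/144: for every real x with x ≠ 0, x ≠ 1/432 and x ≠ 1/864, one has r'(x) + r(x)²/((1-432x)x) - 60 = (121/144)·(1/((1-432x)x)). -/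
/-! In the variable `u = 864x - 1` one has `r = 5u/12 + 1/(2u)`, hence `r' = 360 - 432/u²`, and
`(1 - 432x)x = (1 - u²)/1728`; after clearing the denominators `u²(1 - u²)` the Riccati equation
becomes a polynomial identity in `u`. -/

theorem hasDerivAt_riccati_solution {x : ℝ} (hx : 864 * x - 1 ≠ 0) :
    HasDerivAt (fun y : ℝ => (5 * (864 * y - 1) ^ 2 + 6) / (12 * (864 * y - 1)))
      (360 - 432 / (864 * x - 1) ^ 2) x := by
  have hu : HasDerivAt (fun y : ℝ => 864 * y - 1) 864 x := by
    simpa using ((hasDerivAt_id x).const_mul (864 : ℝ)).sub_const 1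
  refine (((hu.fun_pow 2).const_mul (5 : ℝ)).add_const 6).fun_div (hu.const_mul (12 : ℝ))
    (mul_ne_zero (by norm_num) hx) |>.congr_deriv ?_
  field_simp
  ring

/-- The rational function `r(x) = (5(864x-1)^2 + 6)/(12(864x-1))` solves the Riccati equation
`r'(x) + C_x r(x)^2 - 60 = λ C_x` with `C_x = 1/((1-432x)x)` and `λ = 121/144`, for every real
`x ≠ 0`, `x ≠ 1/432`, `x ≠ 1/864`. -/
theorem riccati_solution_lambda_121_over_144 :
    ∀ x : ℝ, x ≠ 0 → x ≠ 1 / 432 → x ≠ 1 / 864 →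
      deriv (fun y : ℝ => (5 * (864 * y - 1) ^ 2 + 6) / (12 * (864 * y - 1))) x
        + ((5 * (864 * x - 1) ^ 2 + 6) / (12 * (864 * x - 1))) ^ 2 / ((1 - 432 * x) * x) - 60
      = (121 / 144) * (1 / ((1 - 432 * x) * x)) := by
  intro x hx0 hx432 hx864
  have hu : 864 * x - 1 ≠ 0 := fun h => hx864 (by linarith)
  have hC : 1 - 432 * x ≠ 0 := fun h => hx432 (by linarith)
  rw [(hasDerivAt_riccati_solution hu).deriv]
  field_simp
  ring
end

section
/- The rational function r(x) = (864x-1)·(4(864x-1)² + 87)/(12·(3 + 4(864x-1)²)) is a solution of the Riccati equation with parameter λ = 169/144: for every real x with x ≠ 0 and x ≠ 1/432, one has r'(x) + r(x)²/((1-432x)x) - 60 = (169/144)·(1/((1-432x)x)). -/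
/-!
Substitute `u = 864x - 1`: then `r(x) = profile u`, `(1 - 432x)x = (1 - u²)/1728` and
`d/dx = 864 d/du`, so the equation becomes
`(1 - u²)(72 profile'(u) - 5) + 144 profile(u)² = 169`. After clearing the denominator
`(3 + 4u²)²`, both sides equal `169(3 + 4u²)²`.
-/

namespace Riccati

noncomputable def profile (u : ℝ) : ℝ := u * (4 * u ^ 2 + 87) / (12 * (3 + 4 * u ^ 2))

noncomputable def profileDeriv (u : ℝ) : ℝ :=
  (16 * u ^ 4 - 312 * u ^ 2 + 261) / (12 * (3 + 4 * u ^ 2) ^ 2)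

theorem hasDerivAt_profile (u : ℝ) : HasDerivAt profile (profileDeriv u) u := by
  have hnum := (hasDerivAt_id' u).mul (((hasDerivAt_pow 2 u).const_mul 4).add_const 87)
  have hden := (((hasDerivAt_pow 2 u).const_mul 4).const_add 3).const_mul 12
  refine (hnum.div hden (by positivity)).congr_deriv ?_
  have : (3 + 4 * u ^ 2 : ℝ) ≠ 0 := by positivity
  simp only [profileDeriv, Pi.mul_apply]
  field_simp
  ring

theorem profile_riccati (u : ℝ) :
    (1 - u ^ 2) * (72 * profileDeriv u - 5) + 144 * profile u ^ 2 = 169 := by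
  have : (3 + 4 * u ^ 2 : ℝ) ≠ 0 := by positivity
  simp only [profile, profileDeriv]
  field_simp
  ring

end Riccati

open Riccati in
/-- The rational function `r(x) = (864x-1)(4(864x-1)^2 + 87)/(12(3 + 4(864x-1)^2))` solves the
Riccati equation `r'(x) + C_x r(x)^2 - 60 = λ C_x` with `C_x = 1/((1-432x)x)` and
`λ = 169/144`, for every real `x ≠ 0`, `x ≠ 1/432`. -/
theorem riccati_solution_lambda_169_over_144 :
    ∀ x : ℝ, x ≠ 0 → x ≠ 1 / 432 →
      deriv (fun y : ℝ =>
          (864 * y - 1) * (4 * (864 * y - 1) ^ 2 + 87) / (12 * (3 + 4 * (864 * y - 1) ^ 2))) x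
        + ((864 * x - 1) * (4 * (864 * x - 1) ^ 2 + 87)
            / (12 * (3 + 4 * (864 * x - 1) ^ 2))) ^ 2 / ((1 - 432 * x) * x) - 60
      = (169 / 144) * (1 / ((1 - 432 * x) * x)) := by
  intro x hx0 hx1
  have hu : HasDerivAt (fun y : ℝ => 864 * y - 1) 864 x := by
    simpa using ((hasDerivAt_id x).const_mul (864 : ℝ)).sub_const 1
  have hderiv : HasDerivAt (fun y : ℝ => profile (864 * y - 1))
      (profileDeriv (864 * x - 1) * 864) x := by
    exact (hasDerivAt_profile (864 * x - 1)).comp x hu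
  have hC : (1 - 432 * x) * x = (1 - (864 * x - 1) ^ 2) / 1728 := by ring
  have hC_ne : 1 - (864 * x - 1) ^ 2 ≠ 0 := by
    have h432 : 1 - 432 * x ≠ 0 := by contrapose! hx1; linarith
    rw [show 1 - (864 * x - 1) ^ 2 = 1728 * ((1 - 432 * x) * x) by ring]
    exact mul_ne_zero (by norm_num) (mul_ne_zero h432 hx0)
  change deriv (fun y => profile (864 * y - 1)) x + profile (864 * x - 1) ^ 2 / _ - 60 = _
  rw [hderiv.deriv, hC]
  field_simp
  linear_combination 1728 * profile_riccati (864 * x - 1)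
end

section
/- Let n, m, x be real numbers with -1 < x < 1 and n ≠ m, and set s = √(1-x²). Suppose real numbers a, b, c, d, e satisfy the three recurrence relations: (i) s·c + 2(m+1)·x·b + (n-m)·(n+m+1)·s·a = 0; (ii) s·b - (n-m+1)·d + (n+m+1)·x·a = 0; (iii) s·c - (n-m)·e + (n+m+2)·x·b = 0. If a ≠ 0, b ≠ 0, and (n-m+1)·(d/a) - (n+m+1)·x ≠ 0, then x - e/b = (n+m+1)·(1-x²) / ((n-m+1)·(d/a) - (n+m+1)·x). -/
/-- The key recurrence step (Lemma 2): given real quantities `a, b, c, d, e` satisfying the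
three-term recurrences of associated Legendre (Ferrers) functions (DLMF 14.10.1 and 14.10.2),
with `s = √(1-x²)`, if `a ≠ 0`, `b ≠ 0` and `(n-m+1)(d/a) - (n+m+1)x ≠ 0`, then
`x - e/b = (n+m+1)(1-x²)/((n-m+1)(d/a) - (n+m+1)x)`. -/
theorem legendre_ratio_recurrence (n m x : ℝ) (hx1 : -1 < x) (hx2 : x < 1) (hnm : n ≠ m)
    (a b c d e : ℝ)
    (h1 : Real.sqrt (1 - x ^ 2) * c + 2 * (m + 1) * x * b
            + (n - m) * (n + m + 1) * Real.sqrt (1 - x ^ 2) * a = 0)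
    (h2 : Real.sqrt (1 - x ^ 2) * b - (n - m + 1) * d + (n + m + 1) * x * a = 0)
    (h3 : Real.sqrt (1 - x ^ 2) * c - (n - m) * e + (n + m + 2) * x * b = 0)
    (ha : a ≠ 0) (hb : b ≠ 0)
    (hF : (n - m + 1) * (d / a) - (n + m + 1) * x ≠ 0) :
    x - e / b = (n + m + 1) * (1 - x ^ 2) / ((n - m + 1) * (d / a) - (n + m + 1) * x) := by
  set s := Real.sqrt (1 - x ^ 2) with hs
  have hx : (0:ℝ) < 1 - x ^ 2 := by nlinarith
  have hs2 : s ^ 2 = 1 - x ^ 2 := Real.sq_sqrt hx.le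
  have hnm' : n - m ≠ 0 := sub_ne_zero.mpr hnm
  have he : e = x * b - (n + m + 1) * s * a := by
    have key : (n - m) * e = (n - m) * (x * b - (n + m + 1) * s * a) := by ring_nf; nlinarith [h1, h3]
    exact mul_left_cancel₀ hnm' key
  have hF' : (n - m + 1) * d - (n + m + 1) * x * a ≠ 0 := by
    intro h
    apply hF
    field_simp
    linarith
  have hsb : s * b = (n - m + 1) * d - (n + m + 1) * x * a := by linarith
  have hs0 : s ≠ 0 := by positivity
  rw [eq_div_iff hF, he]
  field_simp
  linear_combination (-(n+m+1))*s*a*hsb + (n+m+1)*a*b*hs2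
end

section
/- For every natural number k coprime to 6, the Riccati equation with parameter λ = k²/144 admits a rational solution: there exist real polynomials p and q with q ≠ 0 such that for every real x with x ≠ 0, x ≠ 1/432 and q(x) ≠ 0, the function r(x) = p(x)/q(x) satisfies r'(x) + r(x)²/((1-432x)x) - 60 = (k²/144)·(1/((1-432x)x)). -/
/-!
With `A = x (1 - 432 x)` and `μ = k / 12`, the substitution `r = A q' / q - μ A'` turns the
Riccati equation into the Gauss hypergeometric equation for `q` in the variable `z = 432 x`,
with parameters `a = (1 - k) / 6`, `b = (5 - k) / 6`, `c = 1 - k / 6`. Since `k ≡ ±1 mod 6`,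
one of `a`, `b` equals `-⌊k / 6⌋` while `c` is not a non-positive integer, so
`₂F₁(a, b; c; z)` terminates and gives a nonzero polynomial solution `q`.
-/

open Polynomial Finset

namespace Polynomial

section CommRing

variable {R : Type*} [CommRing R]

/-- For `s = 1` this is Gauss's operator `z (1 - z) F'' + (c - (a + b + 1) z) F' - a b F`;
in general it is `s` times Gauss's operator written in the variable `z = s X`. -/
noncomputable def hypergeometricOperator (s a b c : R) (F : R[X]) : R[X] :=
  X * (1 - C s * X) * derivative (derivative F) + (C c - C (s * (a + b + 1)) * X) * derivative F
    - C (s * a * b) * F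

theorem hypergeometricOperator_comm (s a b c : R) (F : R[X]) :
    hypergeometricOperator s a b c F = hypergeometricOperator s b a c F := by
  rw [hypergeometricOperator, hypergeometricOperator, add_comm a b, mul_right_comm s a b]

theorem hypergeometricOperator_one_eq_zero_of_coeff_recurrence {a b c : R} {F : R[X]}
    (h : ∀ m : ℕ, (m + 1) * (c + m) * F.coeff (m + 1) = (a + m) * (b + m) * F.coeff m) :
    hypergeometricOperator 1 a b c F = 0 := by
  ext m
  have hm := h m
  rcases m with _ | _ | m <;>
  · simp only [hypergeometricOperator, coeff_sub, coeff_add, coeff_C_mul, coeff_zero,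
      coeff_X_mul, mul_sub, sub_mul, add_mul, mul_one, one_mul, mul_assoc, mul_coeff_zero,
      coeff_X_zero, zero_mul, coeff_C_zero, coeff_derivative, map_one] at hm ⊢
    push_cast at hm ⊢
    linear_combination hm

theorem hypergeometricOperator_comp_C_mul_X (s a b c : R) (F : R[X]) :
    hypergeometricOperator s a b c (F.comp (C s * X))
      = C s * (hypergeometricOperator 1 a b c F).comp (C s * X) := by
  simp only [hypergeometricOperator, sub_comp, add_comp, mul_comp, X_comp, C_comp, one_comp,
    derivative_comp, derivative_mul, derivative_C, derivative_X, zero_mul, zero_add, mul_one,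
    one_mul, map_mul, map_one]
  ring

/-- Divided by `A q²`: `r = P / q` solves `r' + r² / A = s (a b + 2 μ - 4 μ²) + μ² / A`. -/
theorem riccati_identity_of_hypergeometricOperator_eq_zero {s a b μ : R} {A P q : R[X]}
    (hq : hypergeometricOperator s a b (1 - 2 * μ) q = 0) (hab : a + b + 1 = 2 * (1 - 2 * μ))
    (hA : A = X * (1 - C s * X)) (hP : P = A * derivative q - C μ * derivative A * q) :
    A * (derivative P * q - P * derivative q) + P ^ 2
      = C (s * (a * b + 2 * μ - 4 * μ ^ 2)) * A * q ^ 2 + C (μ ^ 2) * q ^ 2 := by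
  subst hA hP
  rw [hypergeometricOperator, hab] at hq
  simp only [derivative_mul, derivative_X, derivative_one, derivative_C,
    derivative_zero, map_mul, map_sub, map_add, map_pow, map_one, map_ofNat] at hq ⊢
  linear_combination X * (1 - C s * X) * q * hq

end CommRing

section Field

variable {K : Type*} [Field K]

theorem ordinaryHypergeometricCoefficient_succ_mul [CharZero K] (a b c : K) {m : ℕ}
    (hc : c + m ≠ 0) :
    (m + 1) * (c + m) * ordinaryHypergeometricCoefficient a b c (m + 1)
      = (a + m) * (b + m) * ordinaryHypergeometricCoefficient a b c m := by
  simp only [ordinaryHypergeometricCoefficient, Nat.factorial_succ, Nat.cast_mul,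
    ascPochhammer_succ_eval, mul_inv, Nat.cast_succ]
  have hm : (m : K) + 1 ≠ 0 := Nat.cast_add_one_ne_zero m
  field_simp

/-- When `a = -n`, all later coefficients of `₂F₁(a, b; c; X)` vanish and this is the whole
series. -/
noncomputable def truncatedHypergeometric (a b c : K) (n : ℕ) : K[X] :=
  ∑ m ∈ range (n + 1), C (ordinaryHypergeometricCoefficient a b c m) * X ^ m

theorem coeff_truncatedHypergeometric (a b c : K) (n m : ℕ) :
    (truncatedHypergeometric a b c n).coeff m
      = if m ≤ n then ordinaryHypergeometricCoefficient a b c m else 0 := by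
  simp only [truncatedHypergeometric, finsetSum_coeff, coeff_C_mul_X_pow, sum_ite_eq, mem_range,
    Nat.lt_succ_iff]

theorem truncatedHypergeometric_ne_zero (a b c : K) (n : ℕ) :
    truncatedHypergeometric a b c n ≠ 0 := fun h ↦ by
  simpa [coeff_truncatedHypergeometric] using congrArg (coeff · 0) h

theorem hypergeometricOperator_truncatedHypergeometric [CharZero K] {a b c : K} {n : ℕ}
    (ha : a = -n) (hc : ∀ m < n, c + m ≠ 0) :
    hypergeometricOperator 1 a b c (truncatedHypergeometric a b c n) = 0 := by
  refine hypergeometricOperator_one_eq_zero_of_coeff_recurrence fun m ↦ ?_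
  simp only [coeff_truncatedHypergeometric]
  rcases lt_trichotomy m n with hm | rfl | hm
  · rw [if_pos (Nat.succ_le_of_lt hm), if_pos hm.le]
    exact ordinaryHypergeometricCoefficient_succ_mul a b c (hc m hm)
  · simp [ha]
  · rw [if_neg (by omega), if_neg (by omega)]
    simp

theorem exists_ne_zero_hypergeometricOperator_eq_zero [CharZero K] {s a b c : K} (hs : s ≠ 0)
    {n : ℕ} (hab : a = -n ∨ b = -n) (hc : ∀ m < n, c + m ≠ 0) :
    ∃ F : K[X], F ≠ 0 ∧ hypergeometricOperator s a b c F = 0 := by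
  wlog ha : a = -n generalizing a b
  · simp only [hypergeometricOperator_comm s a b]
    exact this hab.symm (hab.resolve_left ha)
  refine ⟨(truncatedHypergeometric a b c n).comp (C s * X), ?_, ?_⟩
  · rw [Ne, comp_C_mul_X_eq_zero_iff (mem_nonZeroDivisors_of_ne_zero hs)]
    exact truncatedHypergeometric_ne_zero a b c n
  · rw [hypergeometricOperator_comp_C_mul_X, hypergeometricOperator_truncatedHypergeometric ha hc,
      zero_comp, mul_zero]

end Field

end Polynomial

theorem deriv_div_add_sq_div_eq_of_polynomial_identity {𝕜 : Type*} [NontriviallyNormedField 𝕜]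
    {A P q : 𝕜[X]} {c d : 𝕜}
    (h : A * (derivative P * q - P * derivative q) + P ^ 2 = C c * A * q ^ 2 + C d * q ^ 2)
    {x : 𝕜} (hA : A.eval x ≠ 0) (hq : q.eval x ≠ 0) :
    deriv (fun y ↦ P.eval y / q.eval y) x + (P.eval x / q.eval x) ^ 2 / A.eval x - c
      = d / A.eval x := by
  have hx := congrArg (eval x) h
  simp only [eval_add, eval_sub, eval_mul, eval_pow, eval_C] at hx
  rw [((P.hasDerivAt x).fun_div (q.hasDerivAt x) hq).deriv]
  field_simp
  linear_combination hx

theorem Nat.Coprime.mod_six_eq {k : ℕ} (hk : k.Coprime 6) : k % 6 = 1 ∨ k % 6 = 5 := by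
  have h : Nat.gcd (k % 6) 6 = 1 := by rwa [← Nat.gcd_rec, Nat.gcd_comm]
  have : k % 6 < 6 := Nat.mod_lt _ (by norm_num)
  interval_cases hr : k % 6 <;> simp_all

theorem exists_ne_zero_hypergeometricOperator_eq_zero_of_coprime {k : ℕ} (hk : k.Coprime 6) :
    ∃ q : ℝ[X], q ≠ 0 ∧
      hypergeometricOperator (432 : ℝ) ((1 - k) / 6) ((5 - k) / 6) (1 - 2 * (k / 12)) q = 0 := by
  have hk6 := hk.mod_six_eq
  refine exists_ne_zero_hypergeometricOperator_eq_zero (n := k / 6) (by norm_num) ?_ ?_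
  · have hdiv : (k : ℝ) = 6 * (k / 6 : ℕ) + (k % 6 : ℕ) := by
      exact_mod_cast (Nat.div_add_mod k 6).symm
    rcases hk6 with h | h <;> rw [h] at hdiv <;> [left; right] <;> rw [hdiv] <;> push_cast <;> ring
  · intro m _ h
    have : k = 6 * (m + 1) := by exact_mod_cast (by linarith : (k : ℝ) = 6 * (m + 1))
    omega

/-- Existence direction of the main theorem: for every natural number `k` coprime to `6`,
the Riccati equation `r' + C_x r^2 - 60 = (k²/144) C_x`, with `C_x = 1/((1-432x)x)`,
admits a rational solution `r = p/q` with `p, q` real polynomials, `q ≠ 0`. -/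
theorem riccati_rational_solution_of_coprime (k : ℕ) (hk : Nat.Coprime k 6) :
    ∃ p q : Polynomial ℝ, q ≠ 0 ∧
      ∀ x : ℝ, x ≠ 0 → x ≠ 1 / 432 → q.eval x ≠ 0 →
        deriv (fun y : ℝ => p.eval y / q.eval y) x
          + (p.eval x / q.eval x) ^ 2 / ((1 - 432 * x) * x) - 60
        = ((k : ℝ) ^ 2 / 144) * (1 / ((1 - 432 * x) * x)) := by
  obtain ⟨q, hq0, hq⟩ := exists_ne_zero_hypergeometricOperator_eq_zero_of_coprime hk
  set A : ℝ[X] := X * (1 - C 432 * X)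
  set P : ℝ[X] := A * derivative q - C ((k : ℝ) / 12) * derivative A * q
  have hPq : A * (derivative P * q - P * derivative q) + P ^ 2
      = C 60 * A * q ^ 2 + C ((k : ℝ) ^ 2 / 144) * q ^ 2 := by
    rw [riccati_identity_of_hypergeometricOperator_eq_zero hq (by ring) rfl rfl]
    congr 3
    · exact congrArg C (by ring)
    · ring
  refine ⟨P, q, hq0, fun x hx0 hx hqx ↦ ?_⟩
  have hAx : A.eval x = (1 - 432 * x) * x := by
    simp only [A, eval_mul, eval_sub, eval_one, eval_C, eval_X]
    ring
  have hA0 : A.eval x ≠ 0 := hAx ▸ mul_ne_zero (fun h ↦ hx (by linarith)) hx0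
  rw [← hAx, deriv_div_add_sq_div_eq_of_polynomial_identity hPq hA0 hqx]
  ring
end
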